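/- Let g be a finite-dimensional Lie algebra over a field k, let h ⊆ g be a nilpotent self-normalising subalgebra (a Cartan subalgebra), and let A = k[t]/(t^{m+1}). Then h ⊗ A is a nilpotent self-normalising subalgebra of g ⊗ A, i.e. h ⊗ A is a Cartan subalgebra of the truncated current Lie algebra. -/

import Mathlib

/-!
If `S` is free over `R` with basis `(bᵢ)`, every element of `S ⊗ L` is uniquely `∑ bᵢ ⊗ xᵢ`, and
`S ⊗ H` consists of the elements all of whose coordinates `xᵢ` lie in `H`. The coordinates of
`⁅x, 1 ⊗ y⁆` are `⁅xᵢ, y⁆`, so an element normalising `S ⊗ H` has all its coordinates in the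
normaliser of `H`; hence `S ⊗ H` is self-normalising when `H` is. Nilpotency passes to `S ⊗ H`
because it is the image of the nilpotent Lie algebra `S ⊗[R] H`.
-/

open TensorProduct Polynomial

section

variable (k : Type*) [Field k] (g : Type*) [LieRing g] [LieAlgebra k g] (m : ℕ)

local notation "A" => AdjoinRoot ((X : Polynomial k) ^ (m + 1))

/-- The truncated current Lie algebra `g ⊗ k[t]/(t^{m+1})` is a Lie algebra over `k`
(by restriction of scalars from `A = k[t]/(t^{m+1})`). -/
noncomputable instance : LieAlgebra k (A ⊗[k] g) where
  lie_smul c x y := by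
    rw [← algebraMap_smul A c y, lie_smul, algebraMap_smul]

end

theorem Submodule.mem_baseChange_iff_forall_equivFinsuppOfBasisLeft {R S M ι : Type*}
    [CommRing R] [CommRing S] [Algebra R S] [AddCommGroup M] [Module R M] [DecidableEq ι]
    (b : Module.Basis ι R S) (p : Submodule R M) (x : S ⊗[R] M) :
    x ∈ p.baseChange S ↔ ∀ i, equivFinsuppOfBasisLeft b x i ∈ p := by
  constructor
  · rintro ⟨x, rfl⟩ i
    induction x using TensorProduct.induction_on with
    | zero => simp
    | tmul a y => simpa [equivFinsuppOfBasisLeft_apply_tmul_apply] using p.smul_mem _ y.2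
    | add u v hu hv => simpa using p.add_mem hu hv
  · intro h
    rw [← (equivFinsuppOfBasisLeft b).symm_apply_apply x, equivFinsuppOfBasisLeft_symm_apply]
    exact sum_mem fun i _ ↦ tmul_mem_baseChange_of_mem _ (h i)

theorem LieAlgebra.ExtendScalars.equivFinsuppOfBasisLeft_lie_one_tmul {R S L ι : Type*}
    [CommRing R] [CommRing S] [Algebra R S] [LieRing L] [LieAlgebra R L] [DecidableEq ι]
    (b : Module.Basis ι R S) (x : S ⊗[R] L) (y : L) (i : ι) :
    equivFinsuppOfBasisLeft b ⁅x, (1 : S) ⊗ₜ y⁆ i = ⁅equivFinsuppOfBasisLeft b x i, y⁆ := by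
  induction x using TensorProduct.induction_on with
  | zero => simp
  | tmul a z => simp [bracket_tmul]
  | add u v hu hv => simp [add_lie, hu, hv]

namespace LieSubalgebra

variable {R S L : Type*} [CommRing R] [CommRing S] [Algebra R S] [LieRing L] [LieAlgebra R L]
  (H : LieSubalgebra R L)

variable (S) in
noncomputable def baseChange : LieSubalgebra R (S ⊗[R] L) :=
  (LieAlgebra.ExtendScalars.map (AlgHom.id R S) H.incl).range

theorem toSubmodule_baseChange :
    (H.baseChange S).toSubmodule = ((H : Submodule R L).baseChange S).restrictScalars R :=
  rfl

instance isNilpotent_baseChange [LieRing.IsNilpotent H] :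
    LieRing.IsNilpotent (H.baseChange S) :=
  LieHom.isNilpotent_range _

theorem normalizer_baseChange_le [Module.Free R S] :
    (H.baseChange S).normalizer ≤ H.normalizer.baseChange S := by
  classical
  let b := Module.Free.chooseBasis R S
  have mem_iff := Submodule.mem_baseChange_iff_forall_equivFinsuppOfBasisLeft (M := L) b
  intro x hx
  refine (mem_iff _ x).2 fun i ↦ (mem_normalizer_iff _ _).2 fun y hy ↦ ?_
  have hxy : ⁅x, (1 : S) ⊗ₜ y⁆ ∈ H.baseChange S :=
    (mem_normalizer_iff _ _).1 hx _ (Submodule.tmul_mem_baseChange_of_mem 1 hy)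
  rw [← LieAlgebra.ExtendScalars.equivFinsuppOfBasisLeft_lie_one_tmul b]
  exact (mem_iff _ _).1 hxy i

instance isCartanSubalgebra_baseChange [Module.Free R S] [H.IsCartanSubalgebra] :
    (H.baseChange S).IsCartanSubalgebra where
  nilpotent := inferInstance
  self_normalizing := le_antisymm
    (by simpa only [IsCartanSubalgebra.self_normalizing] using H.normalizer_baseChange_le (S := S))
    (H.baseChange S).le_normalizer

end LieSubalgebra

section

variable (k : Type*) [Field k] (g : Type*) [LieRing g] [LieAlgebra k g] (m : ℕ)

local notation "A" => AdjoinRoot ((X : Polynomial k) ^ (m + 1))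

theorem cartan_subalgebra_of_truncated_currents
    (H : LieSubalgebra k g) (hH : H.IsCartanSubalgebra) :
    ∃ H' : LieSubalgebra k (A ⊗[k] g),
      H'.toSubmodule = (Submodule.baseChange A H.toSubmodule).restrictScalars k ∧
      H'.IsCartanSubalgebra :=
  ⟨H.baseChange A, H.toSubmodule_baseChange, H.isCartanSubalgebra_baseChange⟩

end
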